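/- arXiv:0911.4387 — 7 statements merged into one kernel-verified Lean document; each statement's English description precedes it below -/
import Mathlib

section
/- If ρ is a quasimetric with constant A₀ and β ≥ 1 satisfies 2^β = 3A₀², and d is a metric with 2^{-β} d(x,y)^β ≤ ρ(x,y) ≤ 4^β d(x,y)^β for all x, y, then: if (X,ρ) is geometrically doubling with constant N, then (X,d) is geometrically doubling with constant N·16^{βn}, where n = log₂ N. -/
/-!
Iterating the ρ-doubling property `k` times covers a ρ-ball of radius `s` by `N ^ k` ρ-balls of
radius `s / 2 ^ k`. A `d`-ball of radius `r` lies in the ρ-ball of radius `(4r)^β`, and once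
`2 ^ k ≥ 16 ^ β` every ρ-ball of radius `(4r)^β / 2^k` lies in a `d`-ball of radius `r / 2`.
The least such `k` is `⌈4β⌉₊ ≤ 4β + 1`, and `N ^ (4β + 1) = N · 16 ^ (β log₂ N)`.
-/

open Real

section Covering

variable {X : Type*} {ρ : X → X → ℝ} {N : ℕ}

theorem exists_finset_card_le_pow_cover
    (hdoubling : ∀ (x : X) (r : ℝ), 0 < r → ∃ F : Finset X,
      F.card ≤ N ∧ {y | ρ y x < r} ⊆ ⋃ w ∈ F, {y | ρ y w < r / 2})
    (k : ℕ) (x : X) {s : ℝ} (hs : 0 < s) :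
    ∃ F : Finset X, F.card ≤ N ^ k ∧ {y | ρ y x < s} ⊆ ⋃ w ∈ F, {y | ρ y w < s / 2 ^ k} := by
  classical
  induction k with
  | zero => exact ⟨{x}, by simp, fun y hy => by simpa using hy⟩
  | succ k ih =>
    obtain ⟨F, hFcard, hFcov⟩ := ih
    choose G hGcard hGcov using fun w => hdoubling w (s / 2 ^ k) (by positivity)
    refine ⟨F.biUnion G, ?_, ?_⟩
    · calc (F.biUnion G).card ≤ ∑ w ∈ F, (G w).card := Finset.card_biUnion_le
        _ ≤ F.card * N := Finset.sum_le_card_nsmul _ _ _ fun w _ => hGcard w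
        _ ≤ N ^ k * N := Nat.mul_le_mul_right _ hFcard
        _ = N ^ (k + 1) := (pow_succ N k).symm
    · intro y hy
      obtain ⟨w, hw, hyw⟩ := Set.mem_iUnion₂.1 (hFcov hy)
      obtain ⟨v, hv, hyv⟩ := Set.mem_iUnion₂.1 (hGcov w hyw)
      refine Set.mem_iUnion₂.2 ⟨v, Finset.mem_biUnion.2 ⟨w, hw, hv⟩, ?_⟩
      simpa [pow_succ, div_div] using hyv

end Covering

section Comparison

variable {X : Type*} {ρ d : X → X → ℝ} {β : ℝ}

theorem lt_four_mul_rpow_of_lt (hβ : 0 < β) (hd_nonneg : ∀ x y, 0 ≤ d x y)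
    (hcomp : ∀ x y, ρ x y ≤ (4:ℝ) ^ β * d x y ^ β) {x y : X} {r : ℝ} (h : d y x < r) :
    ρ y x < (4 * r) ^ β :=
  calc ρ y x ≤ (4 * d y x) ^ β := by rw [mul_rpow (by norm_num) (hd_nonneg y x)]; exact hcomp y x
    _ < (4 * r) ^ β := by gcongr; exact mul_nonneg (by norm_num) (hd_nonneg y x)

theorem lt_half_of_lt_four_mul_rpow_div (hβ : 0 < β) (hd_nonneg : ∀ x y, 0 ≤ d x y)
    (hcomp : ∀ x y, (2:ℝ) ^ (-β) * d x y ^ β ≤ ρ x y) {x y : X} {r : ℝ} (hr : 0 < r) {k : ℕ}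
    (hk : (16:ℝ) ^ β ≤ 2 ^ k) (h : ρ y x < (4 * r) ^ β / 2 ^ k) :
    d y x < r / 2 := by
  have hd := hd_nonneg y x
  suffices d y x / 2 < r / 4 by linarith
  rw [← rpow_lt_rpow_iff (by positivity) (by positivity) hβ]
  calc (d y x / 2) ^ β = (2:ℝ) ^ (-β) * d y x ^ β := by
        rw [div_rpow hd (by norm_num), rpow_neg (by norm_num), div_eq_inv_mul]
    _ ≤ ρ y x := hcomp y x
    _ < (4 * r) ^ β / 2 ^ k := h
    _ ≤ (4 * r) ^ β / 16 ^ β := by gcongr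
    _ = (r / 4) ^ β := by
        rw [← div_rpow (by positivity) (by norm_num)]; congr 1; ring

end Comparison

theorem sixteen_rpow_mul_logb_two {x : ℝ} (hx : 0 < x) (β : ℝ) :
    (16:ℝ) ^ (β * logb 2 x) = x ^ (4 * β) := by
  rw [show (16:ℝ) = 2 ^ (4:ℝ) by norm_num, ← rpow_mul (by norm_num),
    show 4 * (β * logb 2 x) = logb 2 x * (4 * β) by ring, rpow_mul (by norm_num),
    rpow_logb (by norm_num) (by norm_num) hx]

theorem stmt_4_general (X : Type*) (ρ : X → X → ℝ)
    (d : X → X → ℝ) (β : ℝ) (hβ : 1 ≤ β)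
    (hd_nonneg : ∀ x y, 0 ≤ d x y)
    (hcomp₁ : ∀ x y, (2:ℝ) ^ (-β) * d x y ^ β ≤ ρ x y)
    (hcomp₂ : ∀ x y, ρ x y ≤ (4:ℝ) ^ β * d x y ^ β)
    (N : ℕ) (hN : 0 < N)
    (hdoubling : ∀ (x : X) (r : ℝ), 0 < r → ∃ F : Finset X,
      F.card ≤ N ∧ {y | ρ y x < r} ⊆ ⋃ w ∈ F, {y | ρ y w < r / 2}) :
    ∀ (x : X) (r : ℝ), 0 < r → ∃ F : Finset X,
      (F.card : ℝ) ≤ (N : ℝ) * (16:ℝ) ^ (β * Real.logb 2 N) ∧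
      {y | d y x < r} ⊆ ⋃ w ∈ F, {y | d y w < r / 2} := by
  intro x r hr
  have hβ₀ : 0 < β := by linarith
  have hN₁ : (1:ℝ) ≤ N := by exact_mod_cast hN
  set k := ⌈4 * β⌉₊
  obtain ⟨F, hFcard, hFcov⟩ := exists_finset_card_le_pow_cover hdoubling k x (s := (4 * r) ^ β)
    (by positivity)
  refine ⟨F, ?_, fun y hy => ?_⟩
  · have hk : (k : ℝ) ≤ 4 * β + 1 := (Nat.ceil_lt_add_one (by positivity)).le
    calc (F.card : ℝ) ≤ (N : ℝ) ^ (k : ℝ) := by rw [rpow_natCast]; exact_mod_cast hFcard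
      _ ≤ (N : ℝ) ^ (4 * β + 1) := rpow_le_rpow_of_exponent_le hN₁ hk
      _ = N * 16 ^ (β * logb 2 N) := by
        rw [sixteen_rpow_mul_logb_two (by positivity), rpow_add_one (by positivity), mul_comm]
  · have hk : (16:ℝ) ^ β ≤ 2 ^ k := by
      rw [← rpow_natCast, show (16:ℝ) = 2 ^ (4:ℝ) by norm_num, ← rpow_mul (by norm_num)]
      exact rpow_le_rpow_of_exponent_le (by norm_num) (Nat.le_ceil _)
    obtain ⟨w, hw, hyw⟩ :=
      Set.mem_iUnion₂.1 (hFcov (lt_four_mul_rpow_of_lt hβ₀ hd_nonneg hcomp₂ hy))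
    exact Set.mem_iUnion₂.2 ⟨w, hw, lt_half_of_lt_four_mul_rpow_div hβ₀ hd_nonneg hcomp₁ hr hk hyw⟩

/-- If `2^β = 3A₀²`, `β ≥ 1`, and the metric `d` satisfies
`2^{-β} d(x,y)^β ≤ ρ(x,y) ≤ 4^β d(x,y)^β`, then geometric doubling of `(X,ρ)`
with constant `N` implies geometric doubling of `(X,d)` with constant `N·16^{βn}`,
`n = log₂ N`. -/
theorem stmt_4 (X : Type*) (ρ : X → X → ℝ) (A₀ : ℝ) (hA₀ : 1 ≤ A₀)
    (hρ_symm : ∀ x y, ρ x y = ρ y x)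
    (hρ_self : ∀ x, ρ x x = 0)
    (hρ_nonneg : ∀ x y, 0 ≤ ρ x y)
    (hρ_tri : ∀ x y z, ρ x y ≤ A₀ * (ρ x z + ρ z y))
    (d : X → X → ℝ) (β : ℝ) (hβ : 1 ≤ β) (hβA : (2:ℝ) ^ β = 3 * A₀ ^ 2)
    (hd_symm : ∀ x y, d x y = d y x)
    (hd_self : ∀ x, d x x = 0)
    (hd_nonneg : ∀ x y, 0 ≤ d x y)
    (hd_tri : ∀ x y z, d x y ≤ d x z + d z y)
    (hcomp₁ : ∀ x y, (2:ℝ) ^ (-β) * d x y ^ β ≤ ρ x y)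
    (hcomp₂ : ∀ x y, ρ x y ≤ (4:ℝ) ^ β * d x y ^ β)
    (N : ℕ) (hN : 0 < N)
    (hdoubling : ∀ (x : X) (r : ℝ), 0 < r → ∃ F : Finset X,
      F.card ≤ N ∧ {y | ρ y x < r} ⊆ ⋃ w ∈ F, {y | ρ y w < r / 2}) :
    ∀ (x : X) (r : ℝ), 0 < r → ∃ F : Finset X,
      (F.card : ℝ) ≤ (N : ℝ) * (16:ℝ) ^ (β * Real.logb 2 N) ∧
      {y | d y x < r} ⊆ ⋃ w ∈ F, {y | d y w < r / 2} :=
  stmt_4_general X ρ d β hβ hd_nonneg hcomp₁ hcomp₂ N hN hdoubling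
end

section
/- Let δ ≤ 1/1000 and for each k ∈ ℤ let (x^k_α) be points with d(x^k_α, x^k_β) ≥ δ^k/8 for α ≠ β and min_α d(x, x^k_α) < 4δ^k for all x. With Christ's partial order ≤ on pairs (k,α) and cubes Q^k_α = ⋃_{(ℓ,β)≤(k,α)} B(x^ℓ_β, δ^ℓ/100), the closures Q̄^k_α cover X for every k ∈ ℤ. -/
/-! For fixed `k` the cubes `Q k a` form a locally finite family: each lies in the ball of
radius `5 δ^k` about its centre, the centres are `δ^k / 8`-separated, and balls of a doubling
space are totally bounded, so only finitely many centres lie near any point. Hence the union of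
the closures is the closure of the union, and that union is dense: every `x` is within
`4 δ^(k+n)` of a centre of generation `k + n`, which lies in the cube of its ancestor of
generation `k`. -/

open Metric Filter Topology

section

variable {X : Type*} [MetricSpace X]

lemma exists_finite_cover_ball_div_two_pow
    (hX : ∀ (x : X) (r : ℝ), 0 < r → ∃ F : Finset X, ball x r ⊆ ⋃ w ∈ F, ball w (r / 2))
    (n : ℕ) (x : X) {r : ℝ} (hr : 0 < r) :
    ∃ t : Set X, t.Finite ∧ ball x r ⊆ ⋃ w ∈ t, ball w (r / 2 ^ n) := by
  induction n generalizing x r with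
  | zero => exact ⟨{x}, Set.finite_singleton x, by simp⟩
  | succ n ih =>
    obtain ⟨F, hF⟩ := hX x r hr
    choose t ht_fin ht_cover using fun w : X => ih w (half_pos hr)
    refine ⟨⋃ w ∈ F, t w, F.finite_toSet.biUnion fun w _ => ht_fin w, fun y hy => ?_⟩
    obtain ⟨w, hw, hyw⟩ := Set.mem_iUnion₂.1 (hF hy)
    obtain ⟨v, hv, hyv⟩ := Set.mem_iUnion₂.1 (ht_cover w hyw)
    rw [pow_succ, mul_comm, ← div_div]
    exact Set.mem_biUnion (Set.mem_biUnion hw hv) hyv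

lemma totallyBounded_ball_of_forall_finite_cover_half
    (hX : ∀ (x : X) (r : ℝ), 0 < r → ∃ F : Finset X, ball x r ⊆ ⋃ w ∈ F, ball w (r / 2))
    (x : X) (r : ℝ) : TotallyBounded (ball x r) := by
  rcases le_or_gt r 0 with hr | hr
  · simp [ball_eq_empty.2 hr]
  rw [totallyBounded_iff]
  intro ε hε
  obtain ⟨n, hn⟩ := exists_pow_lt_of_lt_one (div_pos hε hr) one_half_lt_one
  obtain ⟨t, ht_fin, ht_cover⟩ := exists_finite_cover_ball_div_two_pow hX n x hr
  refine ⟨t, ht_fin, ht_cover.trans (Set.iUnion₂_mono fun w _ => ball_subset_ball ?_)⟩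
  rw [div_eq_mul_inv, ← inv_pow, ← one_div]
  calc r * (1 / 2) ^ n ≤ r * (ε / r) := by gcongr
    _ = ε := by field_simp

lemma TotallyBounded.finite_preimage_of_separated {ι : Type*} {s : Set X}
    (hs : TotallyBounded s) {c : ι → X} {ε : ℝ} (hε : 0 < ε)
    (hsep : ∀ a b, a ≠ b → ε ≤ dist (c a) (c b)) : (c ⁻¹' s).Finite := by
  obtain ⟨t, ht_fin, ht_cover⟩ := totallyBounded_iff.1 hs (ε / 2) (half_pos hε)
  refine (ht_fin.biUnion fun w _ => ?_).subset
    ((Set.preimage_mono ht_cover).trans Set.preimage_iUnion₂.subset)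
  refine Set.Subsingleton.finite (s := c ⁻¹' ball w (ε / 2)) fun a ha b hb => ?_
  by_contra hab
  have := dist_triangle_right (c a) (c b) w
  linarith [hsep a b hab, mem_ball.1 ha, mem_ball.1 hb]

lemma locallyFinite_of_subset_ball_of_separated {ι : Type*}
    (hX : ∀ (x : X) (r : ℝ), TotallyBounded (ball x r)) {f : ι → Set X} {c : ι → X}
    {ε R : ℝ} (hε : 0 < ε) (hsep : ∀ a b, a ≠ b → ε ≤ dist (c a) (c b))
    (hf : ∀ i, f i ⊆ ball (c i) R) : LocallyFinite f := by
  intro x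
  refine ⟨ball x 1, ball_mem_nhds x one_pos,
    ((hX x (R + 1)).finite_preimage_of_separated hε hsep).subset ?_⟩
  rintro i ⟨y, hyf, hyx⟩
  show dist (c i) x < R + 1
  have := dist_triangle (c i) y x
  linarith [mem_ball'.1 (hf i hyf), mem_ball.1 hyx]

lemma mem_closure_of_forall_dist_lt_pow {s : Set X} {x : X} {C r : ℝ} (hr₀ : 0 ≤ r)
    (hr₁ : r < 1) (h : ∀ n : ℕ, ∃ y ∈ s, dist y x < C * r ^ n) : x ∈ closure s := by
  choose y hys hyx using h
  refine mem_closure_of_tendsto (f := y) (b := atTop) (tendsto_iff_dist_tendsto_zero.2 ?_)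
    (Eventually.of_forall hys)
  have hlim : Tendsto (fun n : ℕ => C * r ^ n) atTop (𝓝 0) := by
    simpa using (tendsto_pow_atTop_nhds_zero_of_lt_one hr₀ hr₁).const_mul C
  exact squeeze_zero (fun n => dist_nonneg) (fun n => (hyx n).le) hlim

end

theorem stmt_6_general {X : Type*} [MetricSpace X] (N : ℕ)
    (hgd : ∀ (x : X) (r : ℝ), 0 < r → ∃ F : Finset X,
      F.card ≤ N ∧ Metric.ball x r ⊆ ⋃ w ∈ F, Metric.ball w (r / 2))
    {ι : Type*} (c : ℤ → ι → X) (δ : ℝ) (hδ0 : 0 < δ) (hδ : δ ≤ 1/1000)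
    (hsep : ∀ (k : ℤ) (a b : ι), a ≠ b → δ ^ k / 8 ≤ dist (c k a) (c k b))
    (hcov : ∀ (k : ℤ) (x : X), ∃ a, dist x (c k a) < 4 * δ ^ k)
    (le : ℤ × ι → ℤ × ι → Prop)
    (hle_anc : ∀ (m : ℤ) (b : ι) (k : ℤ), k ≤ m → ∃ a, le (m, b) (k, a))
    (Q : ℤ → ι → Set X)
    (hQ : ∀ k a, Q k a =
      ⋃ p ∈ {p : ℤ × ι | le p (k, a)}, Metric.ball (c p.1 p.2) (δ ^ p.1 / 100))
    (hQball : ∀ (k : ℤ) (a : ι), Q k a ⊆ Metric.ball (c k a) (5 * δ ^ k)) :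
    ∀ k : ℤ, (⋃ a, closure (Q k a)) = Set.univ := by
  intro k
  have hX := totallyBounded_ball_of_forall_finite_cover_half
    fun x r hr => (hgd x r hr).imp fun _ hF => hF.2
  have hQ_locFin : LocallyFinite (Q k) :=
    locallyFinite_of_subset_ball_of_separated hX (by positivity) (hsep k) (hQball k)
  rw [← hQ_locFin.closure_iUnion]
  refine Set.eq_univ_of_forall fun x => ?_
  refine mem_closure_of_forall_dist_lt_pow (C := 4 * δ ^ k) hδ0.le (by linarith) fun n => ?_
  obtain ⟨a, ha⟩ := hcov (k + n) x
  obtain ⟨b, hb⟩ := hle_anc (k + n) a k (by omega)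
  refine ⟨c (k + n) a, Set.mem_iUnion.2 ⟨b, ?_⟩, ?_⟩
  · rw [hQ]
    exact Set.mem_biUnion (show (k + n, a) ∈ {p | le p (k, b)} from hb)
      (mem_ball_self (by positivity))
  · rwa [dist_comm, zpow_add₀ hδ0.ne', zpow_natCast, ← mul_assoc] at ha

/-- Christ-type construction: the closures of the dyadic cubes of any fixed
generation `k` cover the whole space `X`. -/
theorem stmt_6 {X : Type*} [MetricSpace X] (N : ℕ) (hN : 0 < N)
    (hgd : ∀ (x : X) (r : ℝ), 0 < r → ∃ F : Finset X,
      F.card ≤ N ∧ Metric.ball x r ⊆ ⋃ w ∈ F, Metric.ball w (r / 2))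
    {ι : Type*} (c : ℤ → ι → X) (δ : ℝ) (hδ0 : 0 < δ) (hδ : δ ≤ 1/1000)
    (hsep : ∀ (k : ℤ) (a b : ι), a ≠ b → δ ^ k / 8 ≤ dist (c k a) (c k b))
    (hcov : ∀ (k : ℤ) (x : X), ∃ a, dist x (c k a) < 4 * δ ^ k)
    (le : ℤ × ι → ℤ × ι → Prop)
    (hle_refl : ∀ p, le p p)
    (hle_trans : ∀ p q s, le p q → le q s → le p s)
    (hle_gen : ∀ p q, le p q → q.1 ≤ p.1)
    (hle_anc : ∀ (m : ℤ) (b : ι) (k : ℤ), k ≤ m → ∃ a, le (m, b) (k, a))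
    (Q : ℤ → ι → Set X)
    (hQ : ∀ k a, Q k a =
      ⋃ p ∈ {p : ℤ × ι | le p (k, a)}, Metric.ball (c p.1 p.2) (δ ^ p.1 / 100))
    (hQball : ∀ (k : ℤ) (a : ι), Q k a ⊆ Metric.ball (c k a) (5 * δ ^ k)) :
    ∀ k : ℤ, (⋃ a, closure (Q k a)) = Set.univ :=
  stmt_6_general N hgd c δ hδ0 hδ hsep hcov le hle_anc Q hQ hQball
end

section
/- With the Christ-type cubes Q^k_α as above and closures Q̄^k_α, for any ℓ ≥ k the closed cube Q̄^k_α equals the union of the closed cubes Q̄^ℓ_σ over all σ with (ℓ,σ) ≤ (k,α). -/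
/-!
The inclusion `⊇` is monotonicity of the cubes in the order. For `⊆`, every point `x` of a
generating ball `B(x^m_b, δ^m/100)` of `Q^k_α` is a limit of centres `x^n_{b_n}` at deep levels
`n` with `d(x, x^n_{b_n}) < 4δ^n`. Since the centres along an ancestor chain drift by less than
`8δ^j` below level `j`, the level-`(m+1)` ancestor of `(n, b_n)` lies within `δ^m/16` of `x^m_b`,
hence is a child of `(m, b)`; so `x^n_{b_n}` lies in a level-`ℓ` descendant cube of `Q^k_α`. Local
finiteness makes the union of the closures of these cubes closed.
-/

open Metric Set

namespace ChristCube

variable {X ι : Type*} [MetricSpace X] {c : ℤ → ι → X} {δ : ℝ} {le : ℤ × ι → ℤ × ι → Prop}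

theorem le_of_common_descendant
    (hle_trans : ∀ p q s, le p q → le q s → le p s)
    (hle_anc : ∀ (m : ℤ) (b : ι) (k : ℤ), k ≤ m → ∃ a, le (m, b) (k, a))
    (hle_unique : ∀ (m : ℤ) (b : ι) (k : ℤ) (a a' : ι),
      le (m, b) (k, a) → le (m, b) (k, a') → a = a')
    {n j j' : ℤ} {b τ τ' : ι} (h : le (n, b) (j, τ)) (h' : le (n, b) (j', τ')) (hj : j' ≤ j) :
    le (j, τ) (j', τ') := by
  obtain ⟨τ'', hτ''⟩ := hle_anc j τ j' hj
  rwa [hle_unique n b j' τ'' τ' (hle_trans _ _ _ h hτ'') h'] at hτ''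

/-- The constant `8` is stable under one step up the chain: `4δ^j + 8δ^(j+1) ≤ 8δ^j` for
`δ ≤ 1/2`. -/
theorem dist_center_lt_of_le (hδ0 : 0 < δ) (hδ : δ ≤ 1 / 2)
    (hle_refl : ∀ p, le p p)
    (hle_trans : ∀ p q s, le p q → le q s → le p s)
    (hle_anc : ∀ (m : ℤ) (b : ι) (k : ℤ), k ≤ m → ∃ a, le (m, b) (k, a))
    (hle_parent_dist : ∀ (m : ℤ) (b a : ι), le (m + 1, b) (m, a) →
      dist (c (m + 1) b) (c m a) < 4 * δ ^ m)
    (hle_unique : ∀ (m : ℤ) (b : ι) (k : ℤ) (a a' : ι),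
      le (m, b) (k, a) → le (m, b) (k, a') → a = a')
    {n j : ℤ} (hjn : j ≤ n) {b τ : ι} (h : le (n, b) (j, τ)) :
    dist (c n b) (c j τ) < 8 * δ ^ j := by
  induction j, hjn using Int.leInductionDown generalizing τ with
  | base =>
    rw [hle_unique n b n τ b h (hle_refl _), dist_self]
    positivity
  | pred j hjn ih =>
    obtain ⟨ρ, hρ⟩ := hle_anc n b j hjn
    have hρτ : le (j - 1 + 1, ρ) (j - 1, τ) := by
      rw [sub_add_cancel]
      exact le_of_common_descendant hle_trans hle_anc hle_unique hρ h (by omega)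
    have hparent := hle_parent_dist (j - 1) ρ τ hρτ
    rw [sub_add_cancel] at hparent
    have hpow : δ ^ j = δ ^ (j - 1) * δ := by
      rw [← zpow_add_one₀ hδ0.ne', sub_add_cancel]
    calc dist (c n b) (c (j - 1) τ)
        ≤ dist (c n b) (c j ρ) + dist (c j ρ) (c (j - 1) τ) := dist_triangle _ _ _
      _ < 8 * δ ^ j + 4 * δ ^ (j - 1) := add_lt_add (ih hρ) hparent
      _ ≤ 8 * δ ^ (j - 1) := by
        rw [hpow]
        nlinarith [zpow_pos hδ0 (j - 1)]

/-- The level-`(m+1)` ancestor of `(n, b)` is within `δ^m/16` of `x^m_a`. -/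
theorem le_of_dist_lt (hδ0 : 0 < δ) (hδ : δ ≤ 1 / 1000)
    (hle_refl : ∀ p, le p p)
    (hle_trans : ∀ p q s, le p q → le q s → le p s)
    (hle_anc : ∀ (m : ℤ) (b : ι) (k : ℤ), k ≤ m → ∃ a, le (m, b) (k, a))
    (hle_parent_dist : ∀ (m : ℤ) (b a : ι), le (m + 1, b) (m, a) →
      dist (c (m + 1) b) (c m a) < 4 * δ ^ m)
    (hle_close : ∀ (m : ℤ) (b a : ι),
      dist (c (m + 1) b) (c m a) < δ ^ m / 16 → le (m + 1, b) (m, a))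
    (hle_unique : ∀ (m : ℤ) (b : ι) (k : ℤ) (a a' : ι),
      le (m, b) (k, a) → le (m, b) (k, a') → a = a')
    {m n : ℤ} (hmn : m < n) {a b : ι} {x : X}
    (hxa : dist x (c m a) < δ ^ m / 100) (hxb : dist x (c n b) < 4 * δ ^ n) :
    le (n, b) (m, a) := by
  obtain ⟨τ, hτ⟩ := hle_anc n b (m + 1) hmn
  have hdrift : dist (c n b) (c (m + 1) τ) < 8 * δ ^ (m + 1) :=
    dist_center_lt_of_le hδ0 (by linarith) hle_refl hle_trans hle_anc hle_parent_dist
      hle_unique hmn hτ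
  have hdeep : δ ^ n ≤ δ ^ (m + 1) :=
    zpow_le_zpow_right_of_le_one₀ hδ0 (by linarith) hmn
  have hstep : δ ^ (m + 1) = δ ^ m * δ := zpow_add_one₀ hδ0.ne' m
  refine hle_trans _ _ _ hτ (hle_close m τ a ?_)
  calc dist (c (m + 1) τ) (c m a)
      ≤ dist (c n b) (c (m + 1) τ) + dist x (c n b) + dist x (c m a) := by
        rw [dist_comm (c n b), dist_comm x (c n b)]
        exact dist_triangle4 _ _ _ _
    _ < δ ^ m / 16 := by
      nlinarith [zpow_pos hδ0 m]

theorem ball_subset_of_le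
    {Q : ℤ → ι → Set X}
    (hQ : ∀ k a, Q k a =
      ⋃ p ∈ {p : ℤ × ι | le p (k, a)}, ball (c p.1 p.2) (δ ^ p.1 / 100))
    {p : ℤ × ι} {k : ℤ} {a : ι} (h : le p (k, a)) :
    ball (c p.1 p.2) (δ ^ p.1 / 100) ⊆ Q k a := by
  rw [hQ]
  exact subset_biUnion_of_mem (u := fun p : ℤ × ι => ball (c p.1 p.2) (δ ^ p.1 / 100)) h

theorem subset_of_le
    (hle_trans : ∀ p q s, le p q → le q s → le p s)
    {Q : ℤ → ι → Set X}
    (hQ : ∀ k a, Q k a =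
      ⋃ p ∈ {p : ℤ × ι | le p (k, a)}, ball (c p.1 p.2) (δ ^ p.1 / 100))
    {k ℓ : ℤ} {a σ : ι} (h : le (ℓ, σ) (k, a)) :
    Q ℓ σ ⊆ Q k a := by
  rw [hQ ℓ σ]
  exact iUnion₂_subset fun p hp => ball_subset_of_le hQ (hle_trans _ _ _ hp h)

theorem exists_ge_zpow_lt (hδ0 : 0 < δ) (hδ1 : δ < 1) {ε : ℝ} (hε : 0 < ε) (n₀ : ℤ) :
    ∃ n ≥ n₀, δ ^ n < ε := by
  obtain ⟨t, ht⟩ := exists_pow_lt_of_lt_one (div_pos hε (zpow_pos hδ0 n₀)) hδ1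
  refine ⟨n₀ + t, by omega, ?_⟩
  rw [zpow_add₀ hδ0.ne', zpow_natCast]
  exact (lt_div_iff₀' (zpow_pos hδ0 n₀)).mp ht

theorem subset_closure_biUnion (hδ0 : 0 < δ) (hδ : δ ≤ 1 / 1000)
    (hcov : ∀ (k : ℤ) (x : X), ∃ a, dist x (c k a) < 4 * δ ^ k)
    (hle_refl : ∀ p, le p p)
    (hle_trans : ∀ p q s, le p q → le q s → le p s)
    (hle_anc : ∀ (m : ℤ) (b : ι) (k : ℤ), k ≤ m → ∃ a, le (m, b) (k, a))
    (hle_parent_dist : ∀ (m : ℤ) (b a : ι), le (m + 1, b) (m, a) →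
      dist (c (m + 1) b) (c m a) < 4 * δ ^ m)
    (hle_close : ∀ (m : ℤ) (b a : ι),
      dist (c (m + 1) b) (c m a) < δ ^ m / 16 → le (m + 1, b) (m, a))
    (hle_unique : ∀ (m : ℤ) (b : ι) (k : ℤ) (a a' : ι),
      le (m, b) (k, a) → le (m, b) (k, a') → a = a')
    {Q : ℤ → ι → Set X}
    (hQ : ∀ k a, Q k a =
      ⋃ p ∈ {p : ℤ × ι | le p (k, a)}, ball (c p.1 p.2) (δ ^ p.1 / 100))
    {k ℓ : ℤ} (hkℓ : k ≤ ℓ) (a : ι) :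
    Q k a ⊆ closure (⋃ σ ∈ {σ : ι | le (ℓ, σ) (k, a)}, Q ℓ σ) := by
  intro x hx
  rw [hQ] at hx
  simp only [mem_iUnion, mem_ofPred_eq, exists_prop, Prod.exists, mem_ball] at hx
  obtain ⟨m, b, hmb, hxb⟩ := hx
  rw [Metric.mem_closure_iff]
  intro ε hε
  obtain ⟨n, hn, hδn⟩ := exists_ge_zpow_lt hδ0 (by linarith) (by positivity : 0 < ε / 4)
    (max (m + 1) ℓ)
  obtain ⟨b', hb'⟩ := hcov n x
  have hb'b : le (n, b') (m, b) :=
    le_of_dist_lt hδ0 hδ hle_refl hle_trans hle_anc hle_parent_dist hle_close hle_unique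
      (by omega) hxb hb'
  obtain ⟨σ, hσ⟩ := hle_anc n b' ℓ (by omega)
  have hσa : le (ℓ, σ) (k, a) :=
    le_of_common_descendant hle_trans hle_anc hle_unique hσ
      (hle_trans _ _ _ hb'b hmb) hkℓ
  refine ⟨c n b', mem_biUnion hσa (ball_subset_of_le hQ hσ ?_), by linarith⟩
  exact mem_ball_self (by positivity)

end ChristCube

theorem stmt_7_general {X : Type*} [MetricSpace X]
    {ι : Type*} (c : ℤ → ι → X) (δ : ℝ) (hδ0 : 0 < δ) (hδ : δ ≤ 1/1000)
    (hcov : ∀ (k : ℤ) (x : X), ∃ a, dist x (c k a) < 4 * δ ^ k)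
    (le : ℤ × ι → ℤ × ι → Prop)
    (hle_refl : ∀ p, le p p)
    (hle_trans : ∀ p q s, le p q → le q s → le p s)
    (hle_anc : ∀ (m : ℤ) (b : ι) (k : ℤ), k ≤ m → ∃ a, le (m, b) (k, a))
    (hle_parent_dist : ∀ (m : ℤ) (b a : ι), le (m + 1, b) (m, a) →
      dist (c (m + 1) b) (c m a) < 4 * δ ^ m)
    (hle_close : ∀ (m : ℤ) (b a : ι),
      dist (c (m + 1) b) (c m a) < δ ^ m / 16 → le (m + 1, b) (m, a))
    (hle_unique : ∀ (m : ℤ) (b : ι) (k : ℤ) (a a' : ι),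
      le (m, b) (k, a) → le (m, b) (k, a') → a = a')
    (Q : ℤ → ι → Set X)
    (hQ : ∀ k a, Q k a =
      ⋃ p ∈ {p : ℤ × ι | le p (k, a)}, Metric.ball (c p.1 p.2) (δ ^ p.1 / 100))
    (hlocfin : ∀ k : ℤ, LocallyFinite (fun a : ι => closure (Q k a))) :
    ∀ (k ℓ : ℤ), k ≤ ℓ → ∀ a : ι,
      closure (Q k a) = ⋃ σ ∈ {σ : ι | le (ℓ, σ) (k, a)}, closure (Q ℓ σ) := by
  intro k ℓ hkℓ a
  set S : Set ι := {σ : ι | le (ℓ, σ) (k, a)}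
  have hclosed : closure (⋃ σ ∈ S, Q ℓ σ) = ⋃ σ ∈ S, closure (Q ℓ σ) := by
    have hS : LocallyFinite (fun σ : S => Q ℓ σ) :=
      ((hlocfin ℓ).comp_injective Subtype.val_injective).subset fun _ => subset_closure
    rw [biUnion_eq_iUnion, biUnion_eq_iUnion, hS.closure_iUnion]
  refine Subset.antisymm ?_
    (iUnion₂_subset fun σ hσ => closure_mono (ChristCube.subset_of_le hle_trans hQ hσ))
  rw [← hclosed]
  exact closure_minimal (ChristCube.subset_closure_biUnion hδ0 hδ hcov hle_refl hle_trans hle_anc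
    hle_parent_dist hle_close hle_unique hQ hkℓ a) isClosed_closure

/-- Christ-type construction: for `ℓ ≥ k` the closed cube `Q̄^k_α` is the union of
the closed cubes `Q̄^ℓ_σ` over all `σ` with `(ℓ,σ) ≤ (k,α)`. -/
theorem stmt_7 {X : Type*} [MetricSpace X] (N : ℕ) (hN : 0 < N)
    (hgd : ∀ (x : X) (r : ℝ), 0 < r → ∃ F : Finset X,
      F.card ≤ N ∧ Metric.ball x r ⊆ ⋃ w ∈ F, Metric.ball w (r / 2))
    {ι : Type*} (c : ℤ → ι → X) (δ : ℝ) (hδ0 : 0 < δ) (hδ : δ ≤ 1/1000)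
    (hsep : ∀ (k : ℤ) (a b : ι), a ≠ b → δ ^ k / 8 ≤ dist (c k a) (c k b))
    (hcov : ∀ (k : ℤ) (x : X), ∃ a, dist x (c k a) < 4 * δ ^ k)
    (le : ℤ × ι → ℤ × ι → Prop)
    (hle_refl : ∀ p, le p p)
    (hle_trans : ∀ p q s, le p q → le q s → le p s)
    (hle_gen : ∀ p q, le p q → q.1 ≤ p.1)
    (hle_anc : ∀ (m : ℤ) (b : ι) (k : ℤ), k ≤ m → ∃ a, le (m, b) (k, a))
    (hle_parent_dist : ∀ (m : ℤ) (b a : ι), le (m + 1, b) (m, a) →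
      dist (c (m + 1) b) (c m a) < 4 * δ ^ m)
    (hle_close : ∀ (m : ℤ) (b a : ι),
      dist (c (m + 1) b) (c m a) < δ ^ m / 16 → le (m + 1, b) (m, a))
    (hle_unique : ∀ (m : ℤ) (b : ι) (k : ℤ) (a a' : ι),
      le (m, b) (k, a) → le (m, b) (k, a') → a = a')
    (Q : ℤ → ι → Set X)
    (hQ : ∀ k a, Q k a =
      ⋃ p ∈ {p : ℤ × ι | le p (k, a)}, Metric.ball (c p.1 p.2) (δ ^ p.1 / 100))
    (hQball : ∀ (k : ℤ) (a : ι), Q k a ⊆ Metric.ball (c k a) (5 * δ ^ k))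
    (hlocfin : ∀ k : ℤ, LocallyFinite (fun a : ι => closure (Q k a))) :
    ∀ (k ℓ : ℤ), k ≤ ℓ → ∀ a : ι,
      closure (Q k a) = ⋃ σ ∈ {σ : ι | le (ℓ, σ) (k, a)}, closure (Q ℓ σ) :=
  stmt_7_general c δ hδ0 hδ hcov le hle_refl hle_trans hle_anc hle_parent_dist hle_close hle_unique
    Q hQ hlocfin
end

section
/- Define the open cubes Q̃^k_α = X ∖ ⋃_{β≠α} Q̄^k_β. If ℓ ≥ k, then either Q̃^ℓ_β ⊂ Q̃^k_α or Q̃^ℓ_β ∩ Q̄^k_α = ∅. -/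
/-! A point `x ∈ Q̃^ℓ_β` lies in no closure `Q̄^ℓ_σ` with `σ ≠ β`, so if it also lies in
`Q̄^k_α'`, the decomposition of `Q̄^k_α'` into closures of level-`ℓ` cubes forces `β` to be one
of its children. Hence `Q^ℓ_β`, which is nonempty because its closure contains `x`, meets
`Q̄^k_α'`. Applied with `α' = α` this contradicts the disjoint alternative of the dichotomy for
`Q^ℓ_β`; applied with `α' ≠ α` it contradicts `Q^ℓ_β ⊆ Q^k_α ⊆ Q̃^k_α`. -/

section ChristCubes

variable {X ι : Type*} [TopologicalSpace X] {le : ℤ × ι → ℤ × ι → Prop}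
  {Q Qo : ℤ → ι → Set X} {k ℓ : ℤ} {a b : ι} {x : X}

lemma le_of_mem_openCube_of_mem_closure
    (hQo : Qo ℓ b = (⋃ c ∈ {c : ι | c ≠ b}, closure (Q ℓ c))ᶜ)
    (hdecomp : closure (Q k a) = ⋃ σ ∈ {σ : ι | le (ℓ, σ) (k, a)}, closure (Q ℓ σ))
    (hx : x ∈ Qo ℓ b) (hxa : x ∈ closure (Q k a)) : le (ℓ, b) (k, a) := by
  rw [hdecomp, Set.mem_iUnion₂] at hxa
  obtain ⟨σ, hσ, hxσ⟩ := hxa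
  obtain rfl : σ = b := by
    by_contra hne
    rw [hQo] at hx
    exact hx (Set.mem_biUnion hne hxσ)
  exact hσ

lemma closure_subset_closure_of_le
    (hdecomp : closure (Q k a) = ⋃ σ ∈ {σ : ι | le (ℓ, σ) (k, a)}, closure (Q ℓ σ))
    (hle : le (ℓ, b) (k, a)) : closure (Q ℓ b) ⊆ closure (Q k a) :=
  hdecomp ▸ Set.subset_biUnion_of_mem (u := fun σ => closure (Q ℓ σ)) hle

lemma inter_closure_nonempty_of_mem_openCube
    (hQo : Qo ℓ b = (⋃ c ∈ {c : ι | c ≠ b}, closure (Q ℓ c))ᶜ)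
    (hQo_sub : Qo ℓ b ⊆ closure (Q ℓ b))
    (hdecomp : closure (Q k a) = ⋃ σ ∈ {σ : ι | le (ℓ, σ) (k, a)}, closure (Q ℓ σ))
    (hx : x ∈ Qo ℓ b) (hxa : x ∈ closure (Q k a)) : (Q ℓ b ∩ closure (Q k a)).Nonempty := by
  obtain ⟨y, hy⟩ := closure_nonempty_iff.mp ⟨x, hQo_sub hx⟩
  have hle := le_of_mem_openCube_of_mem_closure hQo hdecomp hx hxa
  exact ⟨y, hy, closure_subset_closure_of_le hdecomp hle (subset_closure hy)⟩

end ChristCubes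

theorem stmt_8_general {X : Type*} [MetricSpace X]
    {ι : Type*} (le : ℤ × ι → ℤ × ι → Prop)
    (Q : ℤ → ι → Set X) (Qo : ℤ → ι → Set X)
    (hQo : ∀ (k : ℤ) (a : ι),
      Qo k a = (⋃ b ∈ {b : ι | b ≠ a}, closure (Q k b))ᶜ)
    (hsub : ∀ (k : ℤ) (a : ι), Q k a ⊆ Qo k a ∧ Qo k a ⊆ closure (Q k a))
    (hdecomp : ∀ (k ℓ : ℤ), k ≤ ℓ → ∀ a : ι,
      closure (Q k a) = ⋃ σ ∈ {σ : ι | le (ℓ, σ) (k, a)}, closure (Q ℓ σ))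
    (hdyadic : ∀ (k ℓ : ℤ), k ≤ ℓ → ∀ (a b : ι),
      Q ℓ b ⊆ Q k a ∨ Q ℓ b ∩ closure (Q k a) = ∅) :
    ∀ (k ℓ : ℤ), k ≤ ℓ → ∀ (a b : ι),
      Qo ℓ b ⊆ Qo k a ∨ Qo ℓ b ∩ closure (Q k a) = ∅ := by
  intro k ℓ hkl a b
  have meets {x : X} {a' : ι} (hx : x ∈ Qo ℓ b) (hxa' : x ∈ closure (Q k a')) :
      (Q ℓ b ∩ closure (Q k a')).Nonempty :=
    inter_closure_nonempty_of_mem_openCube (hQo ℓ b) (hsub ℓ b).2 (hdecomp k ℓ hkl a') hx hxa'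
  rcases hdyadic k ℓ hkl a b with hQ | hdisj
  · left
    intro x hx
    rw [hQo k a, Set.mem_compl_iff, Set.mem_iUnion₂]
    rintro ⟨a', ha', hxa'⟩
    obtain ⟨y, hyb, hya'⟩ := meets hx hxa'
    have hya : y ∈ Qo k a := (hsub k a).1 (hQ hyb)
    rw [hQo k a] at hya
    exact hya (Set.mem_biUnion ha' hya')
  · right
    refine Set.eq_empty_of_forall_notMem fun x ⟨hx, hxa⟩ => ?_
    exact (meets hx hxa).ne_empty hdisj

/-- Christ-type construction: for the open cubes `Q̃^k_α = X ∖ ⋃_{β≠α} Q̄^k_β`,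
if `ℓ ≥ k` then either `Q̃^ℓ_β ⊆ Q̃^k_α` or `Q̃^ℓ_β ∩ Q̄^k_α = ∅`. -/
theorem stmt_8 {X : Type*} [MetricSpace X]
    {ι : Type*} (le : ℤ × ι → ℤ × ι → Prop)
    (Q : ℤ → ι → Set X) (Qo : ℤ → ι → Set X)
    (hQo : ∀ (k : ℤ) (a : ι),
      Qo k a = (⋃ b ∈ {b : ι | b ≠ a}, closure (Q k b))ᶜ)
    (hsub : ∀ (k : ℤ) (a : ι), Q k a ⊆ Qo k a ∧ Qo k a ⊆ closure (Q k a))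
    (hdecomp : ∀ (k ℓ : ℤ), k ≤ ℓ → ∀ a : ι,
      closure (Q k a) = ⋃ σ ∈ {σ : ι | le (ℓ, σ) (k, a)}, closure (Q ℓ σ))
    (hdyadic : ∀ (k ℓ : ℤ), k ≤ ℓ → ∀ (a b : ι),
      Q ℓ b ⊆ Q k a ∨ Q ℓ b ∩ closure (Q k a) = ∅)
    (hle_unique : ∀ (m : ℤ) (b : ι) (k : ℤ) (a a' : ι),
      le (m, b) (k, a) → le (m, b) (k, a') → a = a') :
    ∀ (k ℓ : ℤ), k ≤ ℓ → ∀ (a b : ι),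
      Qo ℓ b ⊆ Qo k a ∨ Qo ℓ b ∩ closure (Q k a) = ∅ :=
  stmt_8_general le Q Qo hQo hsub hdecomp hdyadic
end

section
/- There exist Borel sets Q̂^k_α (obtained from open and closed sets by finitely many set operations) with Q̃^k_α ⊂ Q̂^k_α ⊂ Q̄^k_α such that for every k ∈ ℤ the sets (Q̂^k_α)_α partition X, for ℓ ≥ k either Q̂^ℓ_β ⊂ Q̂^k_α or Q̂^ℓ_β ∩ Q̂^k_α = ∅, and Q̂^k_α = ⋃_{β:(ℓ,β)≤(k,α)} Q̂^ℓ_β for every ℓ ≥ k. -/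
/-!
Enumerate `ι` by an injection `f : ι → ℕ`. Each point `x` chooses a chain of cubes: at generation
`0` the closed cube of least index containing `x`, at generation `n + 1` the child of the previous
choice of least index containing `x`, and at negative generations the ancestors of its
generation-`0` choice. `Q̂^k_α` is the set of points whose choice at generation `k` is `α`, so the
`Q̂^k_α` partition `X` and inherit the nesting of the chains. Ancestors are unique because a point
of the open cube `Q̃^ℓ_β` lies in exactly one closed cube of each coarser generation; the same fact
puts `Q̃^k_α` inside `Q̂^k_α`. Each choice is a least index among countably many closed sets, so the
cubes are Borel.
-/

open Set Function

namespace ChristCubes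

variable {X ι β : Type*}

section Minimizer

variable [LinearOrder β] [WellFoundedLT β] [Nonempty ι] {f : ι → β} {s : Set ι}

-- An arbitrary element of `ι` when `s` is empty.
noncomputable def minimizer (f : ι → β) (s : Set ι) : ι :=
  Classical.epsilon (MinimalFor (· ∈ s) f)

lemma minimalFor_minimizer (hs : s.Nonempty) : MinimalFor (· ∈ s) f (minimizer f s) :=
  Classical.epsilon_spec (exists_minimalFor_of_wellFoundedLT _ f hs)

lemma minimizer_eq_iff (hf : Injective f) (hs : s.Nonempty) {c : ι} :
    minimizer f s = c ↔ MinimalFor (· ∈ s) f c := by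
  refine ⟨fun h => h ▸ minimalFor_minimizer hs, fun hc => hf ?_⟩
  have hm := minimalFor_minimizer (f := f) hs
  rcases le_total (f (minimizer f s)) (f c) with h | h
  exacts [le_antisymm h (hc.2 hm.1 h), le_antisymm (hm.2 hc.1 h) h]

end Minimizer

lemma measurableSet_setOf_minimalFor [MeasurableSpace X] [Countable ι] [Preorder β]
    {S : ι → Set X} (hS : ∀ b, MeasurableSet (S b)) (f : ι → β) (c : ι) :
    MeasurableSet {x | MinimalFor (x ∈ S ·) f c} := by
  simp only [MinimalFor, ofPred_and, ofPred_forall]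
  exact (hS c).inter (.iInter fun j => (hS j).imp ((MeasurableSet.const _).imp (.const _)))

structure IsCubeSystem [TopologicalSpace X] (le : ℤ × ι → ℤ × ι → Prop)
    (Q Qo : ℤ → ι → Set X) : Prop where
  qo_eq : ∀ k a, Qo k a = (⋃ b ∈ {b : ι | b ≠ a}, closure (Q k b))ᶜ
  subset_qo : ∀ k a, Q k a ⊆ Qo k a
  iUnion_closure : ∀ k, ⋃ a, closure (Q k a) = univ
  closure_eq_biUnion : ∀ k ℓ, k ≤ ℓ → ∀ a,
    closure (Q k a) = ⋃ σ ∈ {σ : ι | le (ℓ, σ) (k, a)}, closure (Q ℓ σ)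
  qo_subset_or_disjoint : ∀ k ℓ, k ≤ ℓ → ∀ a b,
    Qo ℓ b ⊆ Qo k a ∨ Qo ℓ b ∩ closure (Q k a) = ∅

-- Junk when `(ℓ, b)` has no ancestor at generation `k`; for a nonempty cube it is unique.
noncomputable def parent [Nonempty ι] (le : ℤ × ι → ℤ × ι → Prop) (ℓ : ℤ) (b : ι) (k : ℤ) :
    ι :=
  Classical.epsilon fun a => le (ℓ, b) (k, a)

namespace IsCubeSystem

variable [TopologicalSpace X] {le : ℤ × ι → ℤ × ι → Prop} {Q Qo : ℤ → ι → Set X}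
  (h : IsCubeSystem le Q Qo) {k ℓ : ℤ} {a b c : ι} {x : X}
include h

lemma eq_of_mem_qo_of_mem_closure (hx : x ∈ Qo k a) (hb : x ∈ closure (Q k b)) : b = a := by
  by_contra hba
  rw [h.qo_eq] at hx
  exact hx (mem_biUnion hba hb)

lemma closure_subset_of_le (hkl : k ≤ ℓ) (hle : le (ℓ, b) (k, a)) :
    closure (Q ℓ b) ⊆ closure (Q k a) := by
  rw [h.closure_eq_biUnion k ℓ hkl a]
  exact subset_biUnion_of_mem (u := fun σ => closure (Q ℓ σ)) hle

lemma mem_qo_of_mem_qo_of_mem_closure (hkl : k ≤ ℓ) (hx : x ∈ Qo ℓ b)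
    (ha : x ∈ closure (Q k a)) : x ∈ Qo k a := by
  rcases h.qo_subset_or_disjoint k ℓ hkl a b with hsub | hdisj
  · exact hsub hx
  · exact (eq_empty_iff_forall_notMem.mp hdisj x ⟨hx, ha⟩).elim

lemma eq_of_mem_closure_of_mem_qo (hkl : k ≤ ℓ) (hx : x ∈ Qo ℓ b)
    (ha : x ∈ closure (Q k a)) (hc : x ∈ closure (Q k c)) : c = a :=
  h.eq_of_mem_qo_of_mem_closure (h.mem_qo_of_mem_qo_of_mem_closure hkl hx ha) hc

lemma exists_le (hkl : k ≤ ℓ) (hne : (closure (Q ℓ b)).Nonempty) :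
    ∃ a, le (ℓ, b) (k, a) := by
  obtain ⟨y, hy⟩ := closure_nonempty_iff.mp hne
  obtain ⟨a, ha⟩ := mem_iUnion.mp (h.iUnion_closure k ▸ mem_univ y)
  rw [h.closure_eq_biUnion k ℓ hkl a] at ha
  obtain ⟨σ, hσ, hyσ⟩ := mem_iUnion₂.mp ha
  exact ⟨a, h.eq_of_mem_qo_of_mem_closure (h.subset_qo ℓ b hy) hyσ ▸ hσ⟩

lemma eq_of_le_of_le (hkl : k ≤ ℓ) (hne : (closure (Q ℓ b)).Nonempty)
    (ha : le (ℓ, b) (k, a)) (hc : le (ℓ, b) (k, c)) : c = a := by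
  obtain ⟨y, hy⟩ := closure_nonempty_iff.mp hne
  exact h.eq_of_mem_closure_of_mem_qo hkl (h.subset_qo ℓ b hy)
    (h.closure_subset_of_le hkl ha (subset_closure hy))
    (h.closure_subset_of_le hkl hc (subset_closure hy))

variable [Nonempty ι]

lemma le_parent (hkl : k ≤ ℓ) (hne : (closure (Q ℓ b)).Nonempty) :
    le (ℓ, b) (k, parent le ℓ b k) :=
  Classical.epsilon_spec (h.exists_le hkl hne)

lemma parent_eq (hkl : k ≤ ℓ) (hne : (closure (Q ℓ b)).Nonempty) (hle : le (ℓ, b) (k, a)) :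
    parent le ℓ b k = a :=
  h.eq_of_le_of_le hkl hne hle (h.le_parent hkl hne)

lemma closure_subset_parent (hkl : k ≤ ℓ) :
    closure (Q ℓ b) ⊆ closure (Q k (parent le ℓ b k)) :=
  fun x hx => h.closure_subset_of_le hkl (h.le_parent hkl ⟨x, hx⟩) hx

lemma parent_self (hne : (closure (Q ℓ b)).Nonempty) : parent le ℓ b ℓ = b := by
  obtain ⟨y, hy⟩ := closure_nonempty_iff.mp hne
  exact h.eq_of_mem_qo_of_mem_closure (h.subset_qo ℓ b hy)
    (h.closure_subset_parent le_rfl (subset_closure hy))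

lemma parent_parent {m : ℤ} (hkm : k ≤ m) (hmℓ : m ≤ ℓ)
    (hne : (closure (Q ℓ b)).Nonempty) : parent le m (parent le ℓ b m) k = parent le ℓ b k := by
  obtain ⟨y, hy⟩ := closure_nonempty_iff.mp hne
  exact h.eq_of_mem_closure_of_mem_qo (hkm.trans hmℓ) (h.subset_qo ℓ b hy)
    (h.closure_subset_parent (hkm.trans hmℓ) (subset_closure hy))
    (h.closure_subset_parent hkm (h.closure_subset_parent hmℓ (subset_closure hy)))

end IsCubeSystem

noncomputable def chain [TopologicalSpace X] [Nonempty ι] (le : ℤ × ι → ℤ × ι → Prop)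
    (Q : ℤ → ι → Set X) (f : ι → ℕ) (x : X) : ℕ → ι
  | 0 => minimizer f {b | x ∈ closure (Q 0 b)}
  | n + 1 => minimizer f
      {b | x ∈ closure (Q (n + 1 : ℕ) b) ∧ le ((n + 1 : ℕ), b) (n, chain le Q f x n)}

-- `k.toNat = max k 0`: this is `chain x k` for `k ≥ 0`, an ancestor of `chain x 0` for `k < 0`.
noncomputable def label [TopologicalSpace X] [Nonempty ι] (le : ℤ × ι → ℤ × ι → Prop)
    (Q : ℤ → ι → Set X) (f : ι → ℕ) (x : X) (k : ℤ) : ι :=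
  parent le k.toNat (chain le Q f x k.toNat) k

namespace IsCubeSystem

variable [TopologicalSpace X] {le : ℤ × ι → ℤ × ι → Prop} {Q Qo : ℤ → ι → Set X}
  (h : IsCubeSystem le Q Qo) {k ℓ : ℤ} {a c : ι} (x : X) (f : ι → ℕ)
include h

lemma nonempty_setOf_mem_closure (k : ℤ) : {b | x ∈ closure (Q k b)}.Nonempty :=
  mem_iUnion.mp (h.iUnion_closure k ▸ mem_univ x)

lemma nonempty_children {n : ℕ} (hx : x ∈ closure (Q n c)) :
    {b | x ∈ closure (Q (n + 1 : ℕ) b) ∧ le ((n + 1 : ℕ), b) (n, c)}.Nonempty := by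
  rw [h.closure_eq_biUnion n (n + 1 : ℕ) (by omega) c] at hx
  obtain ⟨σ, hσ, hxσ⟩ := mem_iUnion₂.mp hx
  exact ⟨σ, hxσ, hσ⟩

variable [Nonempty ι]

lemma mem_closure_chain : ∀ n : ℕ, x ∈ closure (Q n (chain le Q f x n))
  | 0 => (minimalFor_minimizer (h.nonempty_setOf_mem_closure x 0)).1
  | n + 1 => (minimalFor_minimizer (h.nonempty_children x (mem_closure_chain n))).1.1

lemma chain_succ_le (n : ℕ) :
    le ((n + 1 : ℕ), chain le Q f x (n + 1)) (n, chain le Q f x n) :=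
  (minimalFor_minimizer (h.nonempty_children x (h.mem_closure_chain x f n))).1.2

lemma parent_chain {m n : ℕ} (hmn : m ≤ n) :
    parent le n (chain le Q f x n) m = chain le Q f x m := by
  induction n, hmn using Nat.le_induction with
  | base => exact h.parent_self ⟨x, h.mem_closure_chain x f m⟩
  | succ n hmn ih =>
    have hne : (closure (Q (n + 1 : ℕ) (chain le Q f x (n + 1)))).Nonempty :=
      ⟨x, h.mem_closure_chain x f (n + 1)⟩
    rw [← h.parent_parent (m := n) (by omega) (by omega) hne,
      h.parent_eq (by omega) hne (h.chain_succ_le x f n), ih]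

lemma label_eq_parent_chain {n : ℕ} (hkn : k ≤ n) :
    label le Q f x k = parent le n (chain le Q f x n) k := by
  rw [label, ← h.parent_chain x f (Int.toNat_le.mpr hkn)]
  exact h.parent_parent (Int.self_le_toNat k) (by omega) ⟨x, h.mem_closure_chain x f n⟩

lemma mem_closure_label (k : ℤ) : x ∈ closure (Q k (label le Q f x k)) :=
  h.closure_subset_parent (Int.self_le_toNat k) (h.mem_closure_chain x f k.toNat)

lemma label_eq_parent_label (hkl : k ≤ ℓ) :
    label le Q f x k = parent le ℓ (label le Q f x ℓ) k := by
  have hℓ := Int.self_le_toNat ℓ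
  rw [h.label_eq_parent_chain x f (hkl.trans hℓ), h.label_eq_parent_chain x f hℓ,
    h.parent_parent hkl hℓ ⟨x, h.mem_closure_chain x f _⟩]

lemma le_label (hkl : k ≤ ℓ) : le (ℓ, label le Q f x ℓ) (k, label le Q f x k) :=
  h.label_eq_parent_label x f hkl ▸ h.le_parent hkl ⟨x, h.mem_closure_label x f ℓ⟩

lemma label_eq_of_le (hkl : k ≤ ℓ) (hle : le (ℓ, label le Q f x ℓ) (k, a)) :
    label le Q f x k = a :=
  h.label_eq_parent_label x f hkl ▸ h.parent_eq hkl ⟨x, h.mem_closure_label x f ℓ⟩ hle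

lemma label_eq_of_mem_qo (hx : x ∈ Qo k a) : label le Q f x k = a :=
  h.eq_of_mem_qo_of_mem_closure hx (h.mem_closure_label x f k)

variable [MeasurableSpace X] [OpensMeasurableSpace X] [Countable ι] {f}

lemma measurableSet_setOf_chain_eq (hf : Injective f) :
    ∀ (n : ℕ) (c : ι), MeasurableSet {x | chain le Q f x n = c}
  | 0, c => by
    have hset : {x | chain le Q f x 0 = c} =
        {x | MinimalFor (fun b => x ∈ closure (Q 0 b)) f c} :=
      ext fun x => minimizer_eq_iff hf (h.nonempty_setOf_mem_closure x 0)
    rw [hset]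
    exact measurableSet_setOf_minimalFor (fun b => isClosed_closure.measurableSet) f c
  | n + 1, c => by
    have hset : {x | chain le Q f x (n + 1) = c} = ⋃ c', {x | chain le Q f x n = c'} ∩
        {x | MinimalFor (fun b => x ∈ closure (Q (n + 1 : ℕ) b) ∧
          le ((n + 1 : ℕ), b) (n, c')) f c} := by
      ext x
      simp only [mem_iUnion, mem_inter_iff, mem_ofPred_eq]
      refine ⟨fun hx => ⟨_, rfl, ?_⟩, fun ⟨c', hc', hx⟩ => ?_⟩
      · exact (minimizer_eq_iff hf (h.nonempty_children x (h.mem_closure_chain x f n))).1 hx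
      · subst hc'
        exact (minimizer_eq_iff hf (h.nonempty_children x (h.mem_closure_chain x f n))).2 hx
    rw [hset]
    exact .iUnion fun c' => (measurableSet_setOf_chain_eq hf n c').inter
      (measurableSet_setOf_minimalFor
        (S := fun b => closure (Q (n + 1 : ℕ) b) ∩ {_y | le ((n + 1 : ℕ), b) (n, c')})
        (fun b => isClosed_closure.measurableSet.inter (.const _)) f c)

lemma measurableSet_setOf_label_eq (hf : Injective f) (k : ℤ) (a : ι) :
    MeasurableSet {x | label le Q f x k = a} := by
  change MeasurableSet ((chain le Q f · k.toNat) ⁻¹' {c | parent le k.toNat c k = a})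
  rw [← biUnion_preimage_singleton]
  exact .biUnion (to_countable _) fun c _ => h.measurableSet_setOf_chain_eq hf k.toNat c

end IsCubeSystem

end ChristCubes

theorem stmt_9_general {X : Type*} [MetricSpace X] [MeasurableSpace X] [BorelSpace X]
    {ι : Type*} [Countable ι] (le : ℤ × ι → ℤ × ι → Prop)
    (Q : ℤ → ι → Set X) (Qo : ℤ → ι → Set X)
    (hQo : ∀ (k : ℤ) (a : ι),
      Qo k a = (⋃ b ∈ {b : ι | b ≠ a}, closure (Q k b))ᶜ)
    (hsub : ∀ (k : ℤ) (a : ι), Q k a ⊆ Qo k a ∧ Qo k a ⊆ closure (Q k a))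
    (hcover : ∀ k : ℤ, (⋃ a, closure (Q k a)) = Set.univ)
    (hdecomp : ∀ (k ℓ : ℤ), k ≤ ℓ → ∀ a : ι,
      closure (Q k a) = ⋃ σ ∈ {σ : ι | le (ℓ, σ) (k, a)}, closure (Q ℓ σ))
    (htri : ∀ (k ℓ : ℤ), k ≤ ℓ → ∀ (a b : ι),
      Qo ℓ b ⊆ Qo k a ∨ Qo ℓ b ∩ closure (Q k a) = ∅) :
    ∃ Qh : ℤ → ι → Set X,
      (∀ (k : ℤ) (a : ι), MeasurableSet (Qh k a)) ∧
      (∀ (k : ℤ) (a : ι), Qo k a ⊆ Qh k a ∧ Qh k a ⊆ closure (Q k a)) ∧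
      (∀ k : ℤ, (⋃ a, Qh k a) = Set.univ) ∧
      (∀ k : ℤ, Pairwise fun a b : ι => Disjoint (Qh k a) (Qh k b)) ∧
      (∀ (k ℓ : ℤ), k ≤ ℓ → ∀ (a b : ι),
        Qh ℓ b ⊆ Qh k a ∨ Disjoint (Qh ℓ b) (Qh k a)) ∧
      (∀ (k ℓ : ℤ), k ≤ ℓ → ∀ a : ι,
        Qh k a = ⋃ b ∈ {b : ι | le (ℓ, b) (k, a)}, Qh ℓ b) := by
  have h : ChristCubes.IsCubeSystem le Q Qo :=
    ⟨hQo, fun k a => (hsub k a).1, hcover, hdecomp, htri⟩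
  rcases isEmpty_or_nonempty ι with hι | hι
  · exact ⟨fun _ _ => ∅, by simpa using hcover 0⟩
  obtain ⟨f, hf⟩ := exists_injective_nat ι
  refine ⟨fun k a => {x | ChristCubes.label le Q f x k = a}, h.measurableSet_setOf_label_eq hf,
    fun k a => ⟨fun x => h.label_eq_of_mem_qo x f, fun x hx => hx ▸ h.mem_closure_label x f k⟩,
    fun k => eq_univ_of_forall fun x => mem_iUnion.2 ⟨_, rfl⟩,
    fun k a b hab => disjoint_left.2 fun x hxa hxb => hab (hxa.symm.trans hxb),
    fun k ℓ hkl a b => ?_, fun k ℓ hkl a => ?_⟩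
  · rcases disjoint_or_nonempty_inter {x | ChristCubes.label le Q f x ℓ = b}
      {x | ChristCubes.label le Q f x k = a} with hdisj | ⟨x, hxb, hxa⟩
    · exact .inr hdisj
    · have hle : le (ℓ, b) (k, a) := hxb ▸ hxa ▸ h.le_label x f hkl
      exact .inl fun y hy => h.label_eq_of_le y f hkl (hy ▸ hle)
  · ext x
    simp only [mem_iUnion, mem_ofPred_eq]
    exact ⟨fun hx => ⟨_, hx ▸ h.le_label x f hkl, rfl⟩,
      fun ⟨b, hb, hxb⟩ => h.label_eq_of_le x f hkl (hxb ▸ hb)⟩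

/-- Christ-type construction: existence of "half-open" dyadic cubes `Q̂^k_α`
with `Q̃^k_α ⊆ Q̂^k_α ⊆ Q̄^k_α`, exactly partitioning `X` at every generation,
nested, and such that each cube is the union of its descendants. -/
theorem stmt_9 {X : Type*} [MetricSpace X] [MeasurableSpace X] [BorelSpace X]
    {ι : Type*} [Countable ι] (le : ℤ × ι → ℤ × ι → Prop)
    (Q : ℤ → ι → Set X) (Qo : ℤ → ι → Set X)
    (hQo : ∀ (k : ℤ) (a : ι),
      Qo k a = (⋃ b ∈ {b : ι | b ≠ a}, closure (Q k b))ᶜ)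
    (hsub : ∀ (k : ℤ) (a : ι), Q k a ⊆ Qo k a ∧ Qo k a ⊆ closure (Q k a))
    (hcover : ∀ k : ℤ, (⋃ a, closure (Q k a)) = Set.univ)
    (hdecomp : ∀ (k ℓ : ℤ), k ≤ ℓ → ∀ a : ι,
      closure (Q k a) = ⋃ σ ∈ {σ : ι | le (ℓ, σ) (k, a)}, closure (Q ℓ σ))
    (htri : ∀ (k ℓ : ℤ), k ≤ ℓ → ∀ (a b : ι),
      Qo ℓ b ⊆ Qo k a ∨ Qo ℓ b ∩ closure (Q k a) = ∅)
    (hlocfin : ∀ k : ℤ, LocallyFinite (fun a : ι => closure (Q k a))) :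
    ∃ Qh : ℤ → ι → Set X,
      (∀ (k : ℤ) (a : ι), MeasurableSet (Qh k a)) ∧
      (∀ (k : ℤ) (a : ι), Qo k a ⊆ Qh k a ∧ Qh k a ⊆ closure (Q k a)) ∧
      (∀ k : ℤ, (⋃ a, Qh k a) = Set.univ) ∧
      (∀ k : ℤ, Pairwise fun a b : ι => Disjoint (Qh k a) (Qh k b)) ∧
      (∀ (k ℓ : ℤ), k ≤ ℓ → ∀ (a b : ι),
        Qh ℓ b ⊆ Qh k a ∨ Disjoint (Qh ℓ b) (Qh k a)) ∧
      (∀ (k ℓ : ℤ), k ≤ ℓ → ∀ a : ι,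
        Qh k a = ⋃ b ∈ {b : ι | le (ℓ, b) (k, a)}, Qh ℓ b) :=
  stmt_9_general le Q Qo hQo hsub hcover hdecomp htri
end

section
/- Separated-sets bilinear bound: let S₁, S₂ ⊂ X with diam(S₁) ∼ diam(S₂) and d(S₁,S₂) ≳ ε·min(diam(S₁), diam(S₂)), and let φ, ψ be bounded functions with ∥φ∥_∞ + ∥ψ∥_∞ ≲ 1, supp φ ⊂ S₁, supp ψ ⊂ S₂. If T has kernel satisfying |K(x,y)| ≤ C min(1/λ(x,d(x,y)), 1/λ(y,d(x,y))), then |⟨Tφ, ψ⟩| ≲ ε^{−d} μ(S₁)^{1/2} μ(S₂)^{1/2}, where d = log₂ C_λ. -/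
open MeasureTheory Metric Set Bornology
open scoped ENNReal

/-!
Points of `S₁` and `S₂` are at distance at least `s ≈ ε · diam`, so on `S₂ × S₁` the kernel is
bounded by `min (1 / λ(x, s)) (1 / λ(y, s)) ≤ (λ(x, s) λ(y, s))^{-1/2}`. Each `Sᵢ` lies in a ball
of radius `R ≈ diam` around any of its points, and doubling `log₂ (R / s)` times from `s` gives
`μ(Sᵢ) ≤ λ(·, R) ≲ (R / s)^{log₂ C_λ} λ(·, s) ≈ ε^{-d} λ(·, s)`. Hence
`|K| ≲ ε^{-d} (μ(S₁) μ(S₂))^{-1/2}` on `S₂ × S₁`, and integrating the bounded `φ`, `ψ` over their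
supports contributes the factor `μ(S₁) μ(S₂)`.
-/

lemma rpow_logb_comm {a b : ℝ} (ha : 0 < a) (hb : 0 < b) (c : ℝ) :
    a ^ Real.logb c b = b ^ Real.logb c a := by
  rw [Real.rpow_def_of_pos ha, Real.rpow_def_of_pos hb, Real.logb, Real.logb]
  ring_nf

section Doubling

variable {f : ℝ → ℝ} {C : ℝ}

lemma le_pow_mul_of_doubling (hC : 0 ≤ C) (hf : ∀ r, 0 < r → f (2 * r) ≤ C * f r)
    {r : ℝ} (hr : 0 < r) (n : ℕ) : f (2 ^ n * r) ≤ C ^ n * f r := by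
  induction n with
  | zero => simp
  | succ n ih =>
    calc f (2 ^ (n + 1) * r) = f (2 * (2 ^ n * r)) := by ring_nf
    _ ≤ C * f (2 ^ n * r) := hf _ (by positivity)
    _ ≤ C * (C ^ n * f r) := mul_le_mul_of_nonneg_left ih hC
    _ = C ^ (n + 1) * f r := by ring

lemma le_mul_rpow_logb_mul_of_doubling (hC : 1 ≤ C) (hmono : MonotoneOn f (Ioi 0))
    (hf : ∀ r, 0 < r → f (2 * r) ≤ C * f r) {r R : ℝ} (hr : 0 < r) (hrR : r ≤ R)
    (hfr : 0 ≤ f r) : f R ≤ C * (R / r) ^ Real.logb 2 C * f r := by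
  set n := ⌈Real.logb 2 (R / r)⌉₊
  have hRr : 1 ≤ R / r := (one_le_div hr).2 hrR
  have hR : R ≤ 2 ^ n * r := by
    rw [← div_le_iff₀ hr]
    calc R / r = 2 ^ Real.logb 2 (R / r) :=
          (Real.rpow_logb two_pos (by norm_num) (by positivity)).symm
    _ ≤ 2 ^ (n : ℝ) := Real.rpow_le_rpow_of_exponent_le one_le_two (Nat.le_ceil _)
    _ = 2 ^ n := Real.rpow_natCast 2 n
  have hCn : C ^ n ≤ C * (R / r) ^ Real.logb 2 C := by
    calc C ^ n = C ^ (n : ℝ) := (Real.rpow_natCast C n).symm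
    _ ≤ C ^ (Real.logb 2 (R / r) + 1) := Real.rpow_le_rpow_of_exponent_le hC
          (Nat.ceil_lt_add_one (Real.logb_nonneg one_lt_two hRr)).le
    _ = C * (R / r) ^ Real.logb 2 C := by
          rw [Real.rpow_add_one (by positivity), mul_comm,
            rpow_logb_comm (by positivity) (by positivity)]
  calc f R ≤ f (2 ^ n * r) := hmono (hr.trans_le hrR) (by simp only [mem_Ioi]; positivity) hR
  _ ≤ C ^ n * f r := le_pow_mul_of_doubling (by linarith) hf hr n
  _ ≤ C * (R / r) ^ Real.logb 2 C * f r := mul_le_mul_of_nonneg_right hCn hfr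

end Doubling

lemma min_one_div_le_div_sqrt {a b p q A : ℝ} (ha : 0 < a) (hb : 0 < b) (hp : 0 < p)
    (hq : 0 < q) (hpa : p ≤ A * a) (hqb : q ≤ A * b) :
    min (1 / a) (1 / b) ≤ A / √(p * q) := by
  set u := min (1 / a) (1 / b)
  have hu : 0 ≤ u := le_min (by positivity) (by positivity)
  have hA : 0 ≤ A := nonneg_of_mul_nonneg_left (hp.le.trans hpa) ha
  have huu : u * u ≤ 1 / a * (1 / b) :=
    mul_le_mul (min_le_left _ _) (min_le_right _ _) hu (by positivity)
  have hpq : p * (1 / a) * (q * (1 / b)) ≤ A * A := by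
    rw [← div_eq_mul_one_div, ← div_eq_mul_one_div]
    exact mul_le_mul ((div_le_iff₀ ha).2 hpa) ((div_le_iff₀ hb).2 hqb) (by positivity) hA
  rw [le_div_iff₀ (by positivity), ← Real.sqrt_mul_self hu, ← Real.sqrt_mul_self hA,
    ← Real.sqrt_mul (by positivity)]
  refine Real.sqrt_le_sqrt ?_
  calc u * u * (p * q) ≤ 1 / a * (1 / b) * (p * q) := by gcongr
  _ = p * (1 / a) * (q * (1 / b)) := by ring
  _ ≤ A * A := hpq

lemma lt_two_mul_mul_min {a b C : ℝ} (hC : 1 ≤ C) (ha : 0 < a) (hb : 0 < b) (hab : a ≤ C * b) :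
    a < 2 * C * min a b := by
  have hmin : a ≤ C * min a b := by
    rw [mul_min_of_nonneg _ _ (by linarith)]
    exact le_min (le_mul_of_one_le_left ha.le hC) hab
  have : 0 < C * min a b := mul_pos (by linarith) (lt_min ha hb)
  linarith

section Integrals

variable {X : Type*} [MeasurableSpace X] {μ : Measure X}

lemma abs_integral_le_of_support_subset {f : X → ℝ} {S : Set X} {c : ℝ} (hS : μ S < ∞)
    (hf : Function.support f ⊆ S) (hc : ∀ x ∈ S, |f x| ≤ c) :
    |∫ x, f x ∂μ| ≤ c * μ.real S := by
  rw [← setIntegral_eq_integral_of_forall_compl_eq_zero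
    fun x hx ↦ Function.notMem_support.1 fun h ↦ hx (hf h)]
  simp only [← Real.norm_eq_abs] at hc ⊢
  exact norm_setIntegral_le_of_norm_le_const hS hc

variable {K : X → X → ℝ} {φ ψ : X → ℝ} {S₁ S₂ : Set X}

lemma abs_integral_kernel_le {M Cb : ℝ} (hS₁ : μ S₁ < ∞) (hS₂ : μ S₂ < ∞)
    (hφ : Function.support φ ⊆ S₁) (hψ : Function.support ψ ⊆ S₂)
    (hφb : ∀ y, |φ y| ≤ Cb) (hψb : ∀ x, |ψ x| ≤ Cb) (hK : ∀ x ∈ S₂, ∀ y ∈ S₁, |K x y| ≤ M) :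
    |∫ x, (∫ y, K x y * φ y ∂μ) * ψ x ∂μ| ≤ M * Cb * μ.real S₁ * Cb * μ.real S₂ := by
  have hinner : ∀ x ∈ S₂, |∫ y, K x y * φ y ∂μ| ≤ M * Cb * μ.real S₁ := fun x hx ↦
    abs_integral_le_of_support_subset hS₁ ((Function.support_mul_subset_right _ _).trans hφ)
      fun y hy ↦ by
        rw [abs_mul]
        exact mul_le_mul (hK x hx y hy) (hφb y) (abs_nonneg _)
          ((abs_nonneg _).trans (hK x hx y hy))
  refine abs_integral_le_of_support_subset hS₂
    ((Function.support_mul_subset_right _ _).trans hψ) fun x hx ↦ ?_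
  rw [abs_mul]
  exact mul_le_mul (hinner x hx) (hψb x) (abs_nonneg _) ((abs_nonneg _).trans (hinner x hx))

lemma integral_kernel_eq_zero_of_null (hnull : μ S₁ = 0 ∨ μ S₂ = 0)
    (hφ : Function.support φ ⊆ S₁) (hψ : Function.support ψ ⊆ S₂) :
    ∫ x, (∫ y, K x y * φ y ∂μ) * ψ x ∂μ = 0 := by
  rcases hnull with h | h
  · have hφ0 : ∀ᵐ y ∂μ, φ y = 0 := ae_iff.2 (measure_mono_null hφ h)
    have hinner : ∀ x, ∫ y, K x y * φ y ∂μ = 0 := fun x ↦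
      integral_eq_zero_of_ae (hφ0.mono fun y hy ↦ by simp [hy])
    simp [hinner]
  · have hψ0 : ∀ᵐ x ∂μ, ψ x = 0 := ae_iff.2 (measure_mono_null hψ h)
    exact integral_eq_zero_of_ae (hψ0.mono fun x hx ↦ by simp [hx])

end Integrals

section Geometry

variable {X : Type*} [PseudoMetricSpace X] [MeasurableSpace X] {μ : Measure X} {lam : X → ℝ → ℝ}

lemma measure_lt_top_of_isBounded
    (hball : ∀ x r, 0 < r → μ (ball x r) ≤ ENNReal.ofReal (lam x r)) {S : Set X}
    (hS : IsBounded S) : μ S < ∞ := by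
  rcases S.eq_empty_or_nonempty with rfl | ⟨x, -⟩
  · simp
  obtain ⟨r, hr, hSr⟩ := hS.subset_ball_lt 0 x
  exact (measure_mono hSr).trans_lt ((hball x r hr).trans_lt ENNReal.ofReal_lt_top)

lemma measureReal_le_of_doubling {Cl s R : ℝ} {x : X} (hlam : ∀ r, 0 < r → 0 < lam x r)
    (hmono : MonotoneOn (lam x) (Ioi 0)) (hdouble : ∀ r, 0 < r → lam x (2 * r) ≤ Cl * lam x r)
    (hball : 0 < R → μ (ball x R) ≤ ENNReal.ofReal (lam x R)) (hCl : 1 ≤ Cl) {S : Set X}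
    (hS : IsBounded S) (hx : x ∈ S) (hs : 0 < s) (hsR : s ≤ R) (hR : diam S < R) :
    μ.real S ≤ Cl * (R / s) ^ Real.logb 2 Cl * lam x s := by
  have hR0 : 0 < R := hs.trans_le hsR
  have hSR : S ⊆ ball x R := fun y hy ↦ (dist_le_diam_of_mem hS hy hx).trans_lt hR
  calc μ.real S ≤ lam x R := ENNReal.toReal_le_of_le_ofReal (hlam R hR0).le
        ((measure_mono hSR).trans (hball hR0))
  _ ≤ Cl * (R / s) ^ Real.logb 2 Cl * lam x s :=
        le_mul_rpow_logb_mul_of_doubling hCl hmono hdouble hs hsR (hlam s hs).le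

lemma abs_integral_kernel_le_of_separated {K : X → X → ℝ} {S₁ S₂ : Set X} {φ ψ : X → ℝ}
    {Ck Cl Cb s R : ℝ} (hlam : ∀ x r, 0 < r → 0 < lam x r)
    (hmono : ∀ x, MonotoneOn (lam x) (Ioi 0))
    (hdouble : ∀ x r, 0 < r → lam x (2 * r) ≤ Cl * lam x r)
    (hball : ∀ x r, 0 < r → μ (ball x r) ≤ ENNReal.ofReal (lam x r)) (hCk : 0 ≤ Ck)
    (hCl : 1 ≤ Cl) (hS₁ : IsBounded S₁) (hS₂ : IsBounded S₂) (hs : 0 < s) (hsR : s ≤ R)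
    (hR₁ : diam S₁ < R) (hR₂ : diam S₂ < R) (hsep : ∀ x ∈ S₁, ∀ y ∈ S₂, s ≤ dist x y)
    (hK : ∀ x y, x ≠ y → |K x y| ≤ Ck * min (1 / lam x (dist x y)) (1 / lam y (dist x y)))
    (hφ : Function.support φ ⊆ S₁) (hψ : Function.support ψ ⊆ S₂)
    (hφb : ∀ y, |φ y| ≤ Cb) (hψb : ∀ x, |ψ x| ≤ Cb) :
    |∫ x, (∫ y, K x y * φ y ∂μ) * ψ x ∂μ| ≤
      Ck * Cb ^ 2 * (Cl * (R / s) ^ Real.logb 2 Cl) * √(μ.real S₁) * √(μ.real S₂) := by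
  by_cases hnull : μ S₁ = 0 ∨ μ S₂ = 0
  · rw [integral_kernel_eq_zero_of_null hnull hφ hψ, abs_zero]
    have : 0 < R := hs.trans_le hsR
    positivity
  rw [not_or] at hnull
  set A := Cl * (R / s) ^ Real.logb 2 Cl
  have hfin₁ := measure_lt_top_of_isBounded hball hS₁
  have hfin₂ := measure_lt_top_of_isBounded hball hS₂
  have hpos₁ : 0 < μ.real S₁ := ENNReal.toReal_pos hnull.1 hfin₁.ne
  have hpos₂ : 0 < μ.real S₂ := ENNReal.toReal_pos hnull.2 hfin₂.ne
  have hvol : ∀ {S x}, IsBounded S → x ∈ S → diam S < R → μ.real S ≤ A * lam x s :=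
    fun hS hx hR ↦ measureReal_le_of_doubling (hlam _) (hmono _) (hdouble _) (hball _ R)
      hCl hS hx hs hsR hR
  have hKb : ∀ x ∈ S₂, ∀ y ∈ S₁, |K x y| ≤ Ck * (A / √(μ.real S₂ * μ.real S₁)) := by
    intro x hx y hy
    have hxy : s ≤ dist x y := dist_comm x y ▸ hsep y hy x hx
    have hd : 0 < dist x y := hs.trans_le hxy
    have hlx := hlam x s hs
    have hly := hlam y s hs
    calc |K x y| ≤ Ck * min (1 / lam x (dist x y)) (1 / lam y (dist x y)) :=
          hK x y (by rintro rfl; simp at hd)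
    _ ≤ Ck * min (1 / lam x s) (1 / lam y s) := by
          gcongr
          exacts [hmono x hs hd hxy, hmono y hs hd hxy]
    _ ≤ Ck * (A / √(μ.real S₂ * μ.real S₁)) := by
          gcongr
          exact min_one_div_le_div_sqrt hlx hly hpos₂ hpos₁ (hvol hS₂ hx hR₂) (hvol hS₁ hy hR₁)
  calc |∫ x, (∫ y, K x y * φ y ∂μ) * ψ x ∂μ|
      ≤ Ck * (A / √(μ.real S₂ * μ.real S₁)) * Cb * μ.real S₁ * Cb * μ.real S₂ :=
        abs_integral_kernel_le hfin₁ hfin₂ hφ hψ hφb hψb hKb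
  _ = Ck * Cb ^ 2 * A * √(μ.real S₁) * √(μ.real S₂) := by
        rw [Real.sqrt_mul hpos₂.le]
        field_simp
        rw [Real.sq_sqrt hpos₁.le, Real.sq_sqrt hpos₂.le]
        ring

end Geometry

/-- Separated-sets bilinear bound: for `S₁, S₂` with comparable diameters and
`d(S₁,S₂) ≳ ε·min(diam S₁, diam S₂)`, and bounded `φ, ψ` supported in `S₁, S₂`,
a kernel satisfying the size estimate gives
`|⟨Tφ,ψ⟩| ≲ ε^{−d} μ(S₁)^{1/2} μ(S₂)^{1/2}` with `d = log₂ C_λ`. -/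
theorem stmt_17 (Ck Cl Cdiam Csep Cb : ℝ) (hCk : 0 < Ck) (hCl : 1 < Cl)
    (hCdiam : 1 ≤ Cdiam) (hCsep : 1 ≤ Csep) (hCb : 0 < Cb) :
    ∃ C₀ > (0:ℝ), ∀ (X : Type) [MetricSpace X] [MeasurableSpace X] [BorelSpace X]
      (μ : Measure X) (lam : X → ℝ → ℝ) (K : X → X → ℝ)
      (S₁ S₂ : Set X) (φ ψ : X → ℝ) (ε : ℝ),
      (∀ x r, 0 < r → 0 < lam x r) →
      (∀ x : X, MonotoneOn (lam x) (Set.Ioi (0:ℝ))) →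
      (∀ x r, 0 < r → lam x (2 * r) ≤ Cl * lam x r) →
      (∀ (x : X) (r : ℝ), 0 < r → μ (Metric.ball x r) ≤ ENNReal.ofReal (lam x r)) →
      0 < ε → ε < 1 →
      Bornology.IsBounded S₁ → Bornology.IsBounded S₂ →
      0 < Metric.diam S₁ → 0 < Metric.diam S₂ →
      Metric.diam S₁ ≤ Cdiam * Metric.diam S₂ →
      Metric.diam S₂ ≤ Cdiam * Metric.diam S₁ →
      (∀ x ∈ S₁, ∀ y ∈ S₂,
        Csep⁻¹ * (ε * min (Metric.diam S₁) (Metric.diam S₂)) ≤ dist x y) →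
      (∀ x y : X, x ≠ y →
        |K x y| ≤ Ck * min (1 / lam x (dist x y)) (1 / lam y (dist x y))) →
      Function.support φ ⊆ S₁ → Function.support ψ ⊆ S₂ →
      (∀ x, |φ x| ≤ Cb) → (∀ x, |ψ x| ≤ Cb) →
      |∫ x, (∫ y, K x y * φ y ∂μ) * ψ x ∂μ| ≤
        C₀ * ε ^ (-(Real.logb 2 Cl)) *
          Real.sqrt (μ S₁).toReal * Real.sqrt (μ S₂).toReal := by
  refine ⟨Ck * Cb ^ 2 * (Cl * (2 * Cdiam * Csep) ^ Real.logb 2 Cl), by positivity, ?_⟩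
  intro X _ _ _ μ lam K S₁ S₂ φ ψ ε hlam hmono hdouble hball hε hε1 hS₁ hS₂ hd₁ hd₂ hd₁₂ hd₂₁
    hsep hK hφ hψ hφb hψb
  set m := min (diam S₁) (diam S₂)
  have hm : 0 < m := lt_min hd₁ hd₂
  have hs : 0 < Csep⁻¹ * (ε * m) := by positivity
  have hratio : 2 * Cdiam * m / (Csep⁻¹ * (ε * m)) = 2 * Cdiam * Csep * ε⁻¹ := by
    field_simp
  have hsR : Csep⁻¹ * (ε * m) ≤ 2 * Cdiam * m := by
    rw [← one_le_div hs, hratio]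
    exact one_le_mul_of_one_le_of_one_le (by nlinarith) (one_le_inv_iff₀.2 ⟨hε, hε1.le⟩)
  calc |∫ x, (∫ y, K x y * φ y ∂μ) * ψ x ∂μ|
      ≤ Ck * Cb ^ 2 * (Cl * (2 * Cdiam * m / (Csep⁻¹ * (ε * m))) ^ Real.logb 2 Cl) *
          √(μ.real S₁) * √(μ.real S₂) :=
        abs_integral_kernel_le_of_separated hlam hmono hdouble hball hCk.le hCl.le hS₁ hS₂ hs hsR
          (lt_two_mul_mul_min hCdiam hd₁ hd₂ hd₁₂)
          ((lt_two_mul_mul_min hCdiam hd₂ hd₁ hd₂₁).trans_eq (by rw [min_comm])) hsep hK hφ hψ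
          hφb hψb
  _ = _ := by
        rw [hratio, Real.mul_rpow (by positivity) (by positivity), Real.inv_rpow hε.le,
          ← Real.rpow_neg hε.le, measureReal_def, measureReal_def]
        ring
end

section
/- Random almost-covering with buffer: with τ uniformly distributed on [1,2] and independent of the random centers, define B^k_α = B_ρ(x^k_α, τ A₀^{-4}ϑ^k/32). Then for any fixed x ∈ X and ω ∈ (0,1), the probability that x lies in the annular buffer ⋃_α ((1+ω)B^k_α ∖ B^k_α) is at most η₀(ω) ≲ ω, since membership of x in (1+ω)B^k_α ∖ B^k_α constrains τ to an interval of length at most 4ω and x can lie in (1+ω)B^k_α for at most boundedly many α. -/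
open MeasureTheory Set
open scoped ENNReal

/-!
Write `r = A₀⁻⁴ϑᵏ/32` and `d_α = ρ(x, x^k_α)`. On the almost sure event `τ ∈ [1,2]`, the point `x`
lies in `(1+ω)B^k_α ∖ B^k_α` exactly when `τ ∈ (d_α/((1+ω)r), d_α/r]`, an interval of length at
most `4ω` (it is nonempty only when `d_α < 4r`). The centers with `d_α < 4r` are separated at scale
`(2A₀)⁻²ϑᵏ ≥ 4A₀r`, so geometric doubling allows at most `N` of them; a union bound gives `4Nω`.
-/

lemma exists_finset_card_le_of_separated {X ι : Type*} {ρ : X → X → ℝ} {A₀ s R : ℝ} {N : ℕ}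
    (hA₀ : 0 < A₀) (hsym : ∀ x y, ρ x y = ρ y x)
    (htri : ∀ x y z, ρ x y ≤ A₀ * (ρ x z + ρ z y))
    (hdouble : ∀ (x : X) (r : ℝ), 0 < r → ∃ F : Finset X,
      F.card ≤ N ∧ {y | ρ y x < r} ⊆ ⋃ v ∈ F, {y | ρ y v < r / 2})
    {c : ι → X} (hsep : ∀ a b, a ≠ b → s ≤ ρ (c a) (c b)) (hR : 0 < R) (hRs : A₀ * R ≤ s)
    (x : X) : ∃ S : Finset ι, S.card ≤ N ∧ ∀ a, a ∈ S ↔ ρ x (c a) < R := by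
  obtain ⟨F, hFN, hF⟩ := hdouble x R hR
  have hnear : ∀ a ∈ {a | ρ x (c a) < R}, ∃ v ∈ F, ρ (c a) v < R / 2 := fun a ha => by
    simpa using hF (show ρ (c a) x < R by rwa [hsym])
  have : Nonempty X := ⟨x⟩
  choose! f hfF hfc using hnear
  have hinj : InjOn f {a | ρ x (c a) < R} := by
    intro a ha b hb hab
    by_contra hne
    have hbf : ρ (f a) (c b) < R / 2 := by rw [hab, hsym]; exact hfc b hb
    have := htri (c a) (c b) (f a)
    nlinarith [hsep a b hne, hfc a ha]
  have hfin : {a | ρ x (c a) < R}.Finite :=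
    Finite.of_finite_image (F.finite_toSet.subset (image_subset_iff.2 hfF)) hinj
  refine ⟨hfin.toFinset, ?_, fun a => hfin.mem_toFinset⟩
  exact (Finset.card_le_card_of_injOn f (fun a ha => hfF a (hfin.mem_toFinset.1 ha))
    (by simpa using hinj)).trans hFN

section UniformOnInterval

variable {Ω : Type*} [MeasurableSpace Ω] {P : Measure Ω} {τ : Ω → ℝ} {a b : ℝ}

lemma ae_mem_Icc_of_map_eq (hτm : Measurable τ) (hτd : P.map τ = volume.restrict (Icc a b)) :
    ∀ᵐ ω ∂P, τ ω ∈ Icc a b :=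
  ae_of_ae_map hτm.aemeasurable (hτd ▸ ae_restrict_mem measurableSet_Icc)

lemma measure_preimage_le_volume_of_map_eq (hτm : Measurable τ)
    (hτd : P.map τ = volume.restrict (Icc a b)) {s : Set ℝ} (hs : MeasurableSet s) :
    P (τ ⁻¹' s) ≤ volume s := by
  rw [← Measure.map_apply hτm hs, hτd]
  exact Measure.restrict_apply_le _ _

end UniformOnInterval

lemma volume_Ioc_div_one_add_le {u w : ℝ} (hu : 0 ≤ u) (hw : 0 ≤ w) :
    volume (Ioc (u / (1 + w)) u) ≤ ENNReal.ofReal (u * w) := by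
  rw [Real.volume_Ioc]
  refine ENNReal.ofReal_le_ofReal ?_
  have h : u - u / (1 + w) = u * w / (1 + w) := by field_simp; ring
  rw [h]
  exact div_le_self (by positivity) (by linarith)

/-- Random almost-covering with buffer: with `τ` uniform on `[1,2]` and independent of
the centers, and random balls `B^k_α = B_ρ(x^k_α, τ A₀^{-4}ϑ^k/32)`, for a fixed point
`x` the probability of lying in the annular buffer `⋃_α ((1+ω)B^k_α ∖ B^k_α)` is
at most `η₀(ω) ≲ ω`. -/
theorem stmt_19 (N : ℕ) (hN : 0 < N) (A₀ : ℝ) (hA₀ : 1 ≤ A₀) :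
    ∃ C₀ > (0:ℝ), ∀ (X : Type) (ρ : X → X → ℝ) (ϑ : ℝ) (k : ℤ)
      (Ω : Type) (_mΩ : MeasurableSpace Ω) (P : Measure Ω)
      [IsProbabilityMeasure P]
      (τ : Ω → ℝ) (ι : Type) (c : ι → X) (x : X) (w : ℝ),
      -- quasimetric axioms
      (∀ x' y, ρ x' y = ρ y x') → (∀ x', ρ x' x' = 0) → (∀ x' y, 0 ≤ ρ x' y) →
      (∀ x' y z, ρ x' y ≤ A₀ * (ρ x' z + ρ z y)) →
      -- geometric doubling with constant N
      (∀ (x' : X) (r : ℝ), 0 < r → ∃ F : Finset X,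
        F.card ≤ N ∧ {y | ρ y x' < r} ⊆ ⋃ v ∈ F, {y | ρ y v < r / 2}) →
      0 < ϑ → ϑ < (A₀ ^ 4)⁻¹ / 32 →
      -- separation and covering properties of the random centers
      (∀ a b : ι, a ≠ b → ((2 * A₀)⁻¹) ^ 2 * ϑ ^ k ≤ ρ (c a) (c b)) →
      (∀ y : X, ∃ a, ρ y (c a) < 3 * A₀ ^ 2 * ϑ ^ k) →
      -- τ is uniformly distributed on [1,2]
      Measurable τ →
      Measure.map τ P = volume.restrict (Set.Icc (1:ℝ) 2) →
      0 < w → w < 1 →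
      P {ω | ∃ a : ι,
          τ ω * ((A₀ ^ 4)⁻¹ * ϑ ^ k / 32) ≤ ρ x (c a) ∧
          ρ x (c a) < (1 + w) * (τ ω * ((A₀ ^ 4)⁻¹ * ϑ ^ k / 32))}
        ≤ ENNReal.ofReal (C₀ * w) := by
  refine ⟨4 * N, by positivity, ?_⟩
  intro X ρ ϑ k Ω _ P _ τ ι c x w hsym _ hnonneg htri hdouble hϑ _ hsep _ hτm hτd hw hw1
  set r := (A₀ ^ 4)⁻¹ * ϑ ^ k / 32
  have hr : 0 < r := by positivity
  have hscale : A₀ * (4 * r) ≤ (2 * A₀)⁻¹ ^ 2 * ϑ ^ k := by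
    have : A₀ * (4 * r) = (2 * A₀)⁻¹ ^ 2 * ϑ ^ k * (2 * A₀)⁻¹ := by
      simp only [r]; field_simp; ring
    rw [this]
    exact mul_le_of_le_one_right (by positivity) (inv_le_one_of_one_le₀ (by linarith))
  obtain ⟨S, hSN, hS⟩ := exists_finset_card_le_of_separated (by linarith) hsym htri hdouble
    hsep (by positivity) hscale x
  let I : ι → Set ℝ := fun a => Ioc (ρ x (c a) / r / (1 + w)) (ρ x (c a) / r)
  have hcover : ∀ᵐ ω ∂P, (∃ a, τ ω * r ≤ ρ x (c a) ∧ ρ x (c a) < (1 + w) * (τ ω * r)) →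
      ω ∈ ⋃ a ∈ S, τ ⁻¹' I a := by
    filter_upwards [ae_mem_Icc_of_map_eq hτm hτd] with ω ⟨hτ1, hτ2⟩ ⟨a, hlo, hhi⟩
    have hτr : τ ω * r ≤ 2 * r := by nlinarith
    have haS : a ∈ S := (hS a).2 (by
      nlinarith [mul_le_mul (show 1 + w ≤ 2 by linarith) hτr (by positivity) zero_le_two])
    refine mem_biUnion haS ⟨?_, (le_div_iff₀ hr).2 hlo⟩
    rw [div_div, div_lt_iff₀ (by positivity)]
    linarith
  have hI : ∀ a ∈ S, P (τ ⁻¹' I a) ≤ ENNReal.ofReal (4 * w) := fun a ha => by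
    have hd : ρ x (c a) / r ≤ 4 := (div_le_iff₀ hr).2 (le_of_lt ((hS a).1 ha))
    refine (measure_preimage_le_volume_of_map_eq hτm hτd measurableSet_Ioc).trans
      ((volume_Ioc_div_one_add_le (div_nonneg (hnonneg _ _) hr.le) hw.le).trans ?_)
    exact ENNReal.ofReal_le_ofReal (by nlinarith)
  calc _ ≤ P (⋃ a ∈ S, τ ⁻¹' I a) := measure_mono_ae hcover
    _ ≤ ∑ a ∈ S, P (τ ⁻¹' I a) := measure_biUnion_finset_le _ _
    _ ≤ S.card • ENNReal.ofReal (4 * w) := Finset.sum_le_card_nsmul _ _ _ hI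
    _ ≤ N • ENNReal.ofReal (4 * w) := nsmul_le_nsmul_left bot_le hSN
    _ = ENNReal.ofReal (4 * N * w) := by
      rw [nsmul_eq_mul, ← ENNReal.ofReal_natCast, ← ENNReal.ofReal_mul (by positivity)]
      ring_nf
end
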